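/- arXiv:1910.01874 — 4 statements merged into one kernel-verified Lean document; each statement's English description precedes it below -/
import Mathlib

section
/- Let f ∈ ℂ((x^{-1})) be a formal Laurent series in 1/x with complex coefficients, and suppose f, viewed as a series with coefficients in a field extension C̃ of ℂ, is a rational function with coefficients in C̃, i.e., f ∈ C̃(x). Then f ∈ ℂ(x). In other words, ℂ((x^{-1})) ∩ C̃(x) = ℂ(x) inside C̃((x^{-1})). -/
/-!
Write the rational function as `p / Q` over `C`. Then `f * Q` is a polynomial, which says that the
coefficient vector of `Q` solves the homogeneous linear system `∑ⱼ f₍ₙ₋ⱼ₎ Qⱼ = 0` for `n < 0` and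
`n > deg p`, whose coefficients are complex numbers. A homogeneous system over `ℂ` with a nonzero
solution over an extension field already has one over `ℂ`: otherwise its rows span everything, and
then every solution over the extension vanishes. A complex solution `Q'` makes `f * Q'` a
polynomial `p'`, and `f = p' / Q'`.
-/

open Polynomial Matrix HahnSeries
open scoped LaurentSeries

theorem Matrix.exists_ne_zero_mulVec_eq_zero_of_map {K L m n : Type*} [Field K] [Field L]
    [Algebra K L] [Fintype n] [DecidableEq n] (A : Matrix m n K) {x : n → L} (hx : x ≠ 0)
    (hAx : A.map (algebraMap K L) *ᵥ x = 0) : ∃ y : n → K, y ≠ 0 ∧ A *ᵥ y = 0 := by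
  by_cases hA : Submodule.span K (Set.range A) = ⊤
  · let ψ : (n → K) →ₗ[K] L :=
      ((dotProductEquiv L n x).restrictScalars K) ∘ₗ (Algebra.linearMap K L).compLeft n
    have hψ : ψ = 0 := LinearMap.ext_on_range hA fun i => by
      simpa [ψ, mulVec, dotProduct, mul_comm] using congr_fun hAx i
    refine absurd (_root_.funext fun j => ?_) hx
    simpa [ψ, dotProduct, Pi.single_apply] using LinearMap.congr_fun hψ (Pi.single j 1)
  · obtain ⟨φ, hφ, hφA⟩ :=
      Submodule.exists_dual_map_eq_bot_of_lt_top (lt_top_iff_ne_top.2 hA) inferInstance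
    obtain ⟨y, rfl⟩ := (dotProductEquiv K n).surjective φ
    refine ⟨y, by simpa using hφ, _root_.funext fun i => ?_⟩
    have hAi : dotProductEquiv K n y (A i) ∈ (Submodule.span K (Set.range A)).map _ :=
      Submodule.mem_map_of_mem (Submodule.subset_span (Set.mem_range_self i))
    rw [hφA, Submodule.mem_bot, dotProductEquiv_apply_apply, dotProduct_comm] at hAi
    exact hAi

namespace LaurentSeries

variable {F : Type*} [Field F]

theorem coeff_algebraMap_polynomial (P : F[X]) (n : ℤ) :
    (algebraMap F[X] F⸨X⸩ P).coeff n = if n < 0 then 0 else P.coeff n.natAbs := by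
  rw [Polynomial.algebraMap_hahnSeries_apply, PowerSeries.coeff_coe, Polynomial.coeff_coe]

theorem algebraMap_monomial (j : ℕ) (a : F) :
    algebraMap F[X] F⸨X⸩ (monomial j a) = single (j : ℤ) a := by
  rw [← C_mul_X_pow_eq_monomial, map_mul, map_pow, algebraMap_hahnSeries_apply,
    algebraMap_hahnSeries_apply, Polynomial.coe_C, Polynomial.coe_X, ofPowerSeries_C,
    ofPowerSeries_X, single_pow, C_apply, single_mul_single]
  simp

theorem coeff_mul_algebraMap_ofFn [DecidableEq F] (f : F⸨X⸩) {k : ℕ} (q : Fin k → F) (n : ℤ) :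
    (f * algebraMap F[X] F⸨X⸩ (ofFn k q)).coeff n = ∑ j : Fin k, f.coeff (n - (j : ℕ)) * q j := by
  simp only [ofFn_eq_sum_monomial, map_sum, Finset.mul_sum, algebraMap_monomial,
    HahnSeries.coeff_sum, coeff_mul_single]

theorem mem_range_algebraMap_polynomial_iff (g : F⸨X⸩) :
    g ∈ Set.range (algebraMap F[X] F⸨X⸩) ↔
      ∃ N : ℕ, ∀ n : ℤ, n < 0 ∨ (N : ℤ) < n → g.coeff n = 0 := by
  constructor
  · rintro ⟨P, rfl⟩
    refine ⟨P.natDegree, fun n hn => ?_⟩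
    rw [coeff_algebraMap_polynomial]
    split_ifs
    · rfl
    · exact coeff_eq_zero_of_natDegree_lt (by omega)
  · rintro ⟨N, hN⟩
    classical
    refine ⟨ofFn (N + 1) fun i => g.coeff (i : ℕ), HahnSeries.ext <| funext fun n => ?_⟩
    rw [coeff_algebraMap_polynomial]
    rcases lt_or_ge n 0 with hn | hn
    · rw [if_pos hn, hN n (Or.inl hn)]
    lift n to ℕ using hn
    rcases Nat.lt_or_ge n (N + 1) with hnN | hnN
    · simp [hnN]
    · simp [ofFn_coeff_eq_zero_of_ge _ hnN, hN n (Or.inr (by omega))]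

theorem algebraMap_polynomial_ne_zero {P : F[X]} (hP : P ≠ 0) : algebraMap F[X] F⸨X⸩ P ≠ 0 :=
  (map_ne_zero_iff _ (algebraMap_hahnSeries_injective ℤ)).2 hP

theorem exists_ratFunc_coe_eq_iff (f : F⸨X⸩) :
    (∃ s : RatFunc F, (s : F⸨X⸩) = f) ↔
      ∃ Q : F[X], Q ≠ 0 ∧ f * algebraMap F[X] F⸨X⸩ Q ∈ Set.range (algebraMap F[X] F⸨X⸩) := by
  constructor
  · rintro ⟨s, rfl⟩
    refine ⟨s.denom, s.denom_ne_zero, s.num, ?_⟩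
    have hs := congrArg ((↑) : RatFunc F → F⸨X⸩) s.num_div_denom
    rw [RatFunc.algebraMap_apply_div] at hs
    rw [← hs, div_mul_cancel₀ _ (algebraMap_polynomial_ne_zero s.denom_ne_zero)]
  · rintro ⟨Q, hQ, P, hP⟩
    refine ⟨algebraMap F[X] (RatFunc F) P / algebraMap F[X] (RatFunc F) Q, ?_⟩
    rw [RatFunc.algebraMap_apply_div, hP,
      mul_div_cancel_right₀ _ (algebraMap_polynomial_ne_zero hQ)]

end LaurentSeries

/-- Descent for Laurent series: let `C` be a field extension of `ℂ` and let
`f` be a formal Laurent series with complex coefficients (in the variable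
`X = x⁻¹`; note `ℂ(x) = ℂ(x⁻¹)`, so rationality in `x` is rationality in
`x⁻¹`). If `f`, viewed with coefficients in `C`, is (the Laurent expansion
of) a rational function over `C`, then `f` is a rational function over `ℂ`:
`ℂ((x⁻¹)) ∩ C(x) = ℂ(x)` inside `C((x⁻¹))`. -/
theorem stmt3 {C : Type*} [Field C] [Algebra ℂ C]
    (f : LaurentSeries ℂ)
    (h : ∃ r : RatFunc C, ∀ m : ℤ,
      (r : LaurentSeries C).coeff m = algebraMap ℂ C (f.coeff m)) :
    ∃ s : RatFunc ℂ, (s : LaurentSeries ℂ) = f := by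
  classical
  obtain ⟨r, hr⟩ := h
  obtain ⟨Q, hQ, hrQ⟩ :=
    (LaurentSeries.exists_ratFunc_coe_eq_iff (r : LaurentSeries C)).1 ⟨r, rfl⟩
  obtain ⟨N, hN⟩ := (LaurentSeries.mem_range_algebraMap_polynomial_iff _).1 hrQ
  set k := Q.natDegree + 1
  let A : Matrix {n : ℤ // n < 0 ∨ (N : ℤ) < n} (Fin k) ℂ := fun n j => f.coeff (n - (j : ℕ))
  have hQk : ofFn k (toFn k Q) = Q := ofFn_comp_toFn_eq_id_of_natDegree_lt (Nat.lt_succ_self _)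
  have hAQ : A.map (algebraMap ℂ C) *ᵥ toFn k Q = 0 := funext fun n => by
    have hrQn := hN n n.2
    rw [← hQk, LaurentSeries.coeff_mul_algebraMap_ofFn] at hrQn
    simp only [hr] at hrQn
    exact hrQn
  obtain ⟨q, hq, hAq⟩ :=
    A.exists_ne_zero_mulVec_eq_zero_of_map (fun h0 => hQ (by rw [← hQk, h0, map_zero])) hAQ
  refine (LaurentSeries.exists_ratFunc_coe_eq_iff f).2 ⟨ofFn k q, ?_,
    (LaurentSeries.mem_range_algebraMap_polynomial_iff _).2 ⟨N, fun n hn => ?_⟩⟩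
  · exact fun h0 => hq (injective_ofFn k (h0.trans (ofFn_zero k).symm))
  · rw [LaurentSeries.coeff_mul_algebraMap_ofFn]
    exact congr_fun hAq ⟨n, hn⟩
end

section
/- Let K be a field, let f ∈ K[[x]] be a formal power series with coefficients in K, and let L be a field extension of K. If f is a rational function over L (i.e., there exist nonzero polynomials p, q ∈ L[x] with q·f = p in L[[x]]), then f is a rational function over K. -/
/-!
A power series `f = ∑ aₙ Xⁿ` is rational over a field iff its coefficients eventually satisfy a
nontrivial linear recurrence `∑_{i ≤ d} cᵢ a_{k-i} = 0`. For fixed `d` and starting point this is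
a system of linear equations in `c` whose coefficients `aₙ` lie in `K`. A nonzero solution over
`L` shows that the `K`-span of the coefficient vectors `(a_{k-i})ᵢ` is a proper subspace of
`K^{d+1}`, and any nonzero `K`-linear form vanishing on it is a nonzero solution over `K`.
-/

open scoped Polynomial

theorem exists_ne_zero_forall_sum_mul_eq_zero_of_algebraMap {K L ι κ : Type*} [Field K] [Field L]
    [Algebra K L] [Fintype ι] (v : κ → ι → K) {c : ι → L} (hc : c ≠ 0)
    (h : ∀ k, ∑ i, c i * algebraMap K L (v k i) = 0) :
    ∃ c' : ι → K, c' ≠ 0 ∧ ∀ k, ∑ i, c' i * v k i = 0 := by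
  classical
  have hW : Submodule.span K (Set.range v) < ⊤ := by
    refine lt_top_iff_ne_top.mpr fun hW => hc (funext fun i => ?_)
    have hker : Submodule.span K (Set.range v) ≤ LinearMap.ker (Fintype.linearCombination K c) := by
      rw [Submodule.span_le]
      rintro _ ⟨k, rfl⟩
      simpa [Fintype.linearCombination_apply, Algebra.smul_def, mul_comm] using h k
    simpa [Fintype.linearCombination_apply_single] using
      hker (hW ▸ Submodule.mem_top : Pi.single i 1 ∈ _)
  obtain ⟨φ, hφ, hφW⟩ := Submodule.exists_dual_map_eq_bot_of_lt_top hW inferInstance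
  refine ⟨fun i => φ (Pi.single i 1), fun h0 => hφ ?_, fun k => ?_⟩
  · ext i
    exact congrFun h0 i
  · have hφv : φ (v k) = 0 := by
      rw [← Submodule.mem_bot K, ← hφW]
      exact Submodule.mem_map_of_mem (Submodule.subset_span ⟨k, rfl⟩)
    rw [pi_eq_sum_univ' (v k), map_sum] at hφv
    simpa [mul_comm] using hφv

namespace PowerSeries

variable {R : Type*} [CommSemiring R]

theorem eq_coe_trunc_of_coeff_eq_zero {F : R⟦X⟧} {N : ℕ} (hF : ∀ k, N ≤ k → coeff k F = 0) :
    F = (trunc N F : R⟦X⟧) := by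
  ext k
  rw [Polynomial.coeff_coe, coeff_trunc]
  split_ifs with hk
  · rfl
  · exact hF k (not_lt.mp hk)

theorem coeff_add_polynomial_mul {q : R[X]} {d : ℕ} (hq : q.natDegree ≤ d) (F : R⟦X⟧) (n : ℕ) :
    coeff (n + d) ((q : R⟦X⟧) * F) = ∑ i : Fin (d + 1), q.coeff i * coeff (n + d - i) F := by
  rw [coeff_mul, Finset.Nat.sum_antidiagonal_eq_sum_range_succ
      (fun i j => coeff i (q : R⟦X⟧) * coeff j F),
    Fin.sum_univ_eq_sum_range (fun i => q.coeff i * coeff (n + d - i) F)]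
  simp_rw [Polynomial.coeff_coe]
  refine (Finset.sum_subset (Finset.range_subset_range.mpr (by omega)) fun i _ hi => ?_).symm
  rw [Polynomial.coeff_eq_zero_of_natDegree_lt (by simp at hi; omega), zero_mul]

theorem sum_coeff_mul_coeff_eq_zero_of_polynomial_mul_eq_coe {p q : R[X]} {F : R⟦X⟧}
    (hpq : (q : R⟦X⟧) * F = p) (n : ℕ) :
    ∑ i : Fin (q.natDegree + 1),
      q.coeff i * coeff (n + (p.natDegree + 1) + q.natDegree - i) F = 0 := by
  rw [← coeff_add_polynomial_mul le_rfl, hpq, Polynomial.coeff_coe,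
    Polynomial.coeff_eq_zero_of_natDegree_lt (by omega)]

theorem exists_polynomial_mul_eq_coe_of_sum_mul_coeff_eq_zero {F : R⟦X⟧} {d N : ℕ}
    {c : Fin (d + 1) → R} (hc : c ≠ 0) (h : ∀ n, ∑ i, c i * coeff (n + N + d - i) F = 0) :
    ∃ p q : R[X], q ≠ 0 ∧ (q : R⟦X⟧) * F = p := by
  set q := (Polynomial.degreeLTEquiv R (d + 1)).symm c
  have hq_coeff : ∀ i : Fin (d + 1), (q : R[X]).coeff i = c i := fun i =>
    congrFun ((Polynomial.degreeLTEquiv R (d + 1)).apply_symm_apply c) i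
  have hq_natDegree : (q : R[X]).natDegree ≤ d := Polynomial.natDegree_le_iff_degree_le.mpr <|
    Polynomial.mem_degreeLE.mp (Polynomial.degreeLT_succ_eq_degreeLE (R := R) ▸ q.2)
  refine ⟨trunc (N + d) ((q : R[X]) * F), q, fun h0 => hc (funext fun i => ?_),
    eq_coe_trunc_of_coeff_eq_zero fun k hk => ?_⟩
  · simp [← hq_coeff, h0]
  · obtain ⟨n, rfl⟩ : ∃ n, k = n + N + d := ⟨k - (N + d), by omega⟩
    rw [coeff_add_polynomial_mul hq_natDegree]
    simpa only [hq_coeff] using h n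

end PowerSeries

/-- Rationality of a power series descends along field extensions: if
`f ∈ K[[x]]` and there are polynomials `p, q ∈ L[x]`, `q ≠ 0`, with
`q · f = p` in `L[[x]]` (where `L ⊇ K`), then there are polynomials
`p', q' ∈ K[x]`, `q' ≠ 0`, with `q' · f = p'` in `K[[x]]`. -/
theorem stmt4 {K L : Type*} [Field K] [Field L] [Algebra K L]
    (f : PowerSeries K)
    (h : ∃ p q : Polynomial L, q ≠ 0 ∧
      (q : PowerSeries L) * PowerSeries.map (algebraMap K L) f
        = (p : PowerSeries L)) :
    ∃ p q : Polynomial K, q ≠ 0 ∧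
      (q : PowerSeries K) * f = (p : PowerSeries K) := by
  obtain ⟨p, q, hq, hpq⟩ := h
  have hq_coeff : (fun i : Fin (q.natDegree + 1) => q.coeff i) ≠ 0 := fun h0 =>
    hq (Polynomial.leadingCoeff_eq_zero.mp (congrFun h0 (Fin.last _)))
  obtain ⟨c, hc, hrec⟩ := exists_ne_zero_forall_sum_mul_eq_zero_of_algebraMap _ hq_coeff
    fun n => by
      simpa only [PowerSeries.coeff_map] using
        PowerSeries.sum_coeff_mul_coeff_eq_zero_of_polynomial_mul_eq_coe hpq n
  exact PowerSeries.exists_polynomial_mul_eq_coe_of_sum_mul_coeff_eq_zero hc hrec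
end

section
/- Let q ∈ ℂ* not a root of unity, c ∈ ℂ*, α ∈ ℚ, and let g be a nonzero Puiseux series in ⋃_{j≥1} ℂ((x^{1/j})) satisfying g(qx) = c x^α g(x). Then α = 0 and g = c_0 x^r for some c_0 ∈ ℂ* and r ∈ ℚ with q^r = c. -/
/-!
Comparing coefficients at the order `r` of `g` (if `α > 0`) or at `r + α` (if `α < 0`)
would produce a nonzero coefficient below the order, so `α = 0`.
Then `(q^β - c) a_β = 0` for every `β`, so every exponent `β` in the support satisfies `q^β = c`;
on `(1/j)ℤ` the map `β ↦ q^β` is injective because raising to the `j`-th power turns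
`q^(m/j) = q^(m'/j)` into `q^(m - m') = 1`. Hence the support is the single point `r`.
-/

theorem zpow_eq_one_of_forall_pow_ne_one {M : Type*} [DivisionMonoid M] {q : M}
    (hq : ∀ m : ℕ, m ≠ 0 → q ^ m ≠ 1) {k : ℤ} (hk : q ^ k = 1) : k = 0 := by
  cases k with
  | ofNat n =>
    by_contra hn
    exact hq n (fun h0 => hn (by simp [h0])) (by simpa using hk)
  | negSucc n =>
    exact absurd (by simpa using hk) (hq (n + 1) n.succ_ne_zero)

theorem Complex.cpow_intCast_div_natCast_injective {q : ℂ} (hq0 : q ≠ 0)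
    (hq : ∀ m : ℕ, m ≠ 0 → q ^ m ≠ 1) {j : ℕ} (hj : j ≠ 0) {m m' : ℤ}
    (h : q ^ (((m / j : ℚ)) : ℂ) = q ^ (((m' / j : ℚ)) : ℂ)) : m = m' := by
  have hpow : ∀ n : ℤ, (q ^ (((n / j : ℚ)) : ℂ)) ^ j = q ^ n := fun n => by
    rw [← cpow_nat_mul, ← cpow_intCast]
    congr 1
    push_cast
    field_simp
  have hdiff : q ^ (m - m') = 1 := by
    rw [zpow_sub₀ hq0, ← hpow, ← hpow, h, div_self (pow_ne_zero _ (by simp [hq0]))]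
  exact sub_eq_zero.mp (zpow_eq_one_of_forall_pow_ne_one hq hdiff)

namespace HahnSeries

theorem coeff_eq_ite_order_of_support_subsingleton {Γ R : Type*} [Zero Γ]
    [LinearOrder Γ] [Zero R] {g : HahnSeries Γ R} (hg : g.support.Subsingleton) (β : Γ) :
    g.coeff β = if β = g.order then g.coeff g.order else 0 := by
  split_ifs with hβ
  · rw [hβ]
  · by_contra hne
    have hg0 : g ≠ 0 := ne_zero_of_coeff_ne_zero hne
    exact hβ (hg hne (coeff_order_eq_zero.not.mpr hg0))

variable {Γ R : Type*} [AddCommGroup Γ] [LinearOrder Γ] [IsOrderedAddMonoid Γ]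
  [MulZeroClass R] [NoZeroDivisors R]

theorem eq_zero_of_mul_coeff_eq_mul_coeff_sub {g : HahnSeries Γ R} (hg : g ≠ 0)
    {u : Γ → R} (hu : ∀ β, u β ≠ 0) {c : R} (hc : c ≠ 0) {α : Γ}
    (h : ∀ β, u β * g.coeff β = c * g.coeff (β - α)) : α = 0 := by
  have horder : g.coeff g.order ≠ 0 := coeff_order_eq_zero.not.mpr hg
  rcases lt_trichotomy α 0 with hneg | hzero | hpos
  · have hbelow := h (g.order + α)
    rw [add_sub_cancel_right, coeff_eq_zero_of_lt_order (i := g.order + α) (by simpa using hneg),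
      mul_zero] at hbelow
    exact absurd hbelow.symm (mul_ne_zero hc horder)
  · exact hzero
  · have hat := h g.order
    rw [coeff_eq_zero_of_lt_order (i := g.order - α) (by simpa using hpos), mul_zero] at hat
    exact absurd hat (mul_ne_zero (hu _) horder)

end HahnSeries

/-- Let `q ∈ ℂ*` not be a root of unity, `c ∈ ℂ*`, `α ∈ ℚ`, and let
`g = ∑ a_β x^β` be a nonzero Puiseux series (a Hahn series over `ℚ` with
support in `(1/j)ℤ`) satisfying `g(qx) = c x^α g(x)`, i.e. coefficientwise
`q^β a_β = c a_{β-α}`. Then `α = 0` and `g = c₀ x^r` is a monomial, with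
`c₀ ∈ ℂ*` and `r ∈ ℚ` satisfying `q^r = c`. -/
theorem stmt11 (q : ℂ) (hq0 : q ≠ 0)
    (hqru : ∀ m : ℕ, m ≠ 0 → q ^ m ≠ 1)
    (c : ℂ) (hc : c ≠ 0) (α : ℚ)
    (g : HahnSeries ℚ ℂ) (hg : g ≠ 0) (j : ℕ) (hj : 0 < j)
    (hsupp : ∀ β ∈ g.support, ∃ m : ℤ, β = (m : ℚ) / (j : ℚ))
    (heq : ∀ β : ℚ, q ^ (β : ℂ) * g.coeff β = c * g.coeff (β - α)) :
    α = 0 ∧ ∃ (r : ℚ) (c₀ : ℂ), c₀ ≠ 0 ∧ q ^ (r : ℂ) = c ∧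
      ∀ β : ℚ, g.coeff β = if β = r then c₀ else 0 := by
  obtain rfl : α = 0 := HahnSeries.eq_zero_of_mul_coeff_eq_mul_coeff_sub hg
    (fun β => Complex.cpow_ne_zero_iff.mpr (Or.inl hq0)) hc heq
  have hfixed : ∀ β ∈ g.support, q ^ (β : ℂ) = c := fun β hβ =>
    mul_right_cancel₀ hβ (by simpa using heq β)
  have hsingle : g.support.Subsingleton := by
    intro β hβ β' hβ'
    have hcpow := (hfixed β hβ).trans (hfixed β' hβ').symm
    obtain ⟨m, rfl⟩ := hsupp β hβ
    obtain ⟨m', rfl⟩ := hsupp β' hβ'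
    rw [Complex.cpow_intCast_div_natCast_injective hq0 hqru hj.ne' hcpow]
  have horder : g.coeff g.order ≠ 0 := HahnSeries.coeff_order_eq_zero.not.mpr hg
  exact ⟨rfl, g.order, g.coeff g.order, horder, hfixed _ horder,
    HahnSeries.coeff_eq_ite_order_of_support_subsingleton hsingle⟩
end

section
/- Let h ∈ ℂ*, and let Γ denote the Gamma function, which satisfies Γ(x+1) = xΓ(x) and is transcendental over ℂ(x). Let F_0 = ℂ(x, Γ(x)) ⊆ Mer(ℂ) with the automorphism ρ(f)(x) = f(x+1). Then the field of ρ-constants of F_0 is ℂ: if β ∈ ℂ(x, Γ) satisfies β(x+1) = β(x), then β ∈ ℂ. -/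
/-!
Write `β = p / q` in lowest terms over `K = ℂ(x)`, with `q` monic in `T`. On `K[T]` the
automorphism `ρ` acts by a degree-preserving ring map `τ` (shift the coefficients, `T ↦ x T`), so
`ρ β = β` forces `τ p = c p` and `τ q = c q` for a single `c ∈ K`. Coefficientwise this reads
`σ(fᵢ) xⁱ = xⁿ fᵢ`, and since the shift `σ` preserves the degree in `x`, `fᵢ = 0` unless `i = n`.
Hence `β = pₙ ∈ K` with `pₙ(x + 1) = pₙ(x)`. The same lowest-terms argument over `ℂ[x]` makes
numerator and denominator of `pₙ` shift-invariant, and a shift-invariant polynomial takes the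
value `P(0)` at every natural number, so it is constant.
-/

open Polynomial

namespace Polynomial

theorem eq_C_of_taylor_eq_self {R : Type*} [CommRing R] [IsDomain R] [CharZero R] {r : R}
    (hr : r ≠ 0) {p : R[X]} (hp : taylor r p = p) : p = C (p.eval 0) := by
  have periodic : ∀ n : ℕ, p.eval (n * r) = p.eval 0 := by
    intro n
    induction n with
    | zero => simp
    | succ k ih => rw [Nat.cast_succ, add_one_mul, ← taylor_eval, hp, ih]
  refine sub_eq_zero.mp (eq_zero_of_infinite_isRoot _ ?_)
  refine Set.infinite_of_injective_forall_mem (f := fun n : ℕ ↦ (n : R) * r) ?_ fun n ↦ ?_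
  · exact fun m n h ↦ Nat.cast_injective (mul_right_cancel₀ hr h)
  · simp [periodic n]

theorem exists_C_mul_of_mul_eq_mul_of_isCoprime {K : Type*} [Field K] {p q p' q' : K[X]}
    (hpq : IsCoprime p q) (hq : q ≠ 0) (hdeg : q'.degree = q.degree) (h : p' * q = p * q') :
    ∃ c : K, p' = C c * p ∧ q' = C c * q := by
  obtain ⟨r, hr⟩ : q ∣ q' := hpq.symm.dvd_of_dvd_mul_left ⟨p', by rw [← h, mul_comm]⟩
  have hq' : q' ≠ 0 := by rwa [← degree_ne_bot, hdeg, degree_ne_bot]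
  have hr0 : r ≠ 0 := by rintro rfl; exact hq' (by rw [hr, mul_zero])
  have hrdeg : r.natDegree = 0 := by
    have := natDegree_eq_of_degree_eq hdeg
    rw [hr, natDegree_mul hq hr0] at this
    omega
  refine ⟨r.coeff 0, mul_right_cancel₀ hq ?_, ?_⟩ <;>
    rw [← eq_C_of_natDegree_eq_zero hrdeg]
  · rw [h, hr]; ring
  · rw [hr, mul_comm]

end Polynomial

namespace RatFunc

variable {K : Type*} [Field K]

theorem exists_num_denom_eq_C_mul_of_map_eq_self {ψ : RatFunc K →+* RatFunc K}
    {φ : K[X] →+* K[X]}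
    (hψ : ∀ f, ψ (algebraMap K[X] (RatFunc K) f) = algebraMap K[X] (RatFunc K) (φ f))
    (hφ : ∀ f, (φ f).degree = f.degree) {β : RatFunc K} (hβ : ψ β = β) :
    ∃ c : K, φ β.num = Polynomial.C c * β.num ∧ φ β.denom = Polynomial.C c * β.denom := by
  refine exists_C_mul_of_mul_eq_mul_of_isCoprime β.isCoprime_num_denom β.denom_ne_zero (hφ _) ?_
  have hφq : φ β.denom ≠ 0 := by rw [← degree_ne_bot, hφ, degree_ne_bot]; exact β.denom_ne_zero
  apply algebraMap_injective K
  rw [map_mul, map_mul, ← div_eq_div_iff (algebraMap_ne_zero hφq)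
    (algebraMap_ne_zero β.denom_ne_zero), ← hψ, ← hψ, ← map_div₀, num_div_denom, hβ]

noncomputable def shift (r : K) : RatFunc K →+* RatFunc K :=
  (IsFractionRing.ringEquivOfRingEquiv (taylorEquiv r).toRingEquiv : RatFunc K ≃+* RatFunc K)

theorem shift_algebraMap (r : K) (p : K[X]) :
    shift r (algebraMap K[X] (RatFunc K) p) = algebraMap K[X] (RatFunc K) (taylor r p) :=
  IsFractionRing.ringEquivOfRingEquiv_algebraMap _ p

theorem intDegree_shift (r : K) (b : RatFunc K) : (shift r b).intDegree = b.intDegree := by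
  rcases eq_or_ne b 0 with rfl | hb
  · rw [map_zero]
  have hnum : b.num ≠ 0 := num_ne_zero hb
  have hdenom : b.denom ≠ 0 := b.denom_ne_zero
  have hquot (p q : K[X]) (hp : p ≠ 0) (hq : q ≠ 0) :
      (algebraMap K[X] (RatFunc K) p / algebraMap K[X] (RatFunc K) q).intDegree
        = p.natDegree - q.natDegree := by
    rw [div_eq_mul_inv,
      intDegree_mul (algebraMap_ne_zero hp) (inv_ne_zero (algebraMap_ne_zero hq)),
      intDegree_inv, intDegree_polynomial, intDegree_polynomial, sub_eq_add_neg]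
  rw [← num_div_denom b, map_div₀, shift_algebraMap, shift_algebraMap,
    hquot _ _ ((taylor_eq_zero r _).not.mpr hnum) ((taylor_eq_zero r _).not.mpr hdenom),
    hquot _ _ hnum hdenom, natDegree_taylor, natDegree_taylor]

theorem exists_eq_algebraMap_of_shift_eq_self [CharZero K] {r : K} (hr : r ≠ 0) {b : RatFunc K}
    (hb : shift r b = b) : ∃ c : K, b = algebraMap K (RatFunc K) c := by
  obtain ⟨c, hnum, hdenom⟩ := exists_num_denom_eq_C_mul_of_map_eq_self
    (φ := (taylorEquiv r : K[X] →+* K[X])) (shift_algebraMap r) (degree_taylor · r) hb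
  change taylor r _ = _ at hnum hdenom
  have hc : 1 = c := by
    simpa [leadingCoeff_taylor, b.monic_denom.leadingCoeff] using congrArg leadingCoeff hdenom
  rw [← hc, map_one, one_mul] at hnum hdenom
  have hdenom1 : b.denom = 1 := by
    rw [← b.monic_denom.natDegree_eq_zero, eq_C_of_taylor_eq_self hr hdenom, natDegree_C]
  refine ⟨b.num.eval 0, ?_⟩
  conv_lhs => rw [← num_div_denom b, hdenom1, eq_C_of_taylor_eq_self hr hnum]
  rw [map_one, div_one, algebraMap_C, algebraMap_eq_C]

section Twist

variable (σ : RatFunc K →+* RatFunc K)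

/-- With `σ` the shift and `T` standing for `Γ`, this is the action of `ρ` on `ℂ(x)[T]` dictated
by `Γ(x + 1) = x Γ(x)`. -/
noncomputable def twist : (RatFunc K)[X] →+* (RatFunc K)[X] :=
  (compRingHom (Polynomial.C (RatFunc.X : RatFunc K) * Polynomial.X)).comp
    (Polynomial.mapRingHom σ)

theorem coeff_twist (f : (RatFunc K)[X]) (n : ℕ) :
    (twist σ f).coeff n = σ (f.coeff n) * RatFunc.X ^ n := by
  simp [twist]

theorem support_twist (f : (RatFunc K)[X]) : (twist σ f).support = f.support := by
  ext n
  simp [coeff_twist, X_ne_zero]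

theorem degree_twist (f : (RatFunc K)[X]) : (twist σ f).degree = f.degree := by
  rw [degree, degree, support_twist]

variable {σ}

theorem eq_C_mul_X_pow_of_twist_eq (hσ : ∀ b, (σ b).intDegree = b.intDegree)
    {f : (RatFunc K)[X]} {n : ℕ} (h : twist σ f = Polynomial.C (RatFunc.X ^ n) * f) :
    f = Polynomial.C (f.coeff n) * Polynomial.X ^ n ∧ σ (f.coeff n) = f.coeff n := by
  have hcoeff (i : ℕ) : σ (f.coeff i) * RatFunc.X ^ i = f.coeff i * RatFunc.X ^ n := by
    rw [← coeff_twist, h, coeff_C_mul, mul_comm]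
  have hsupport (i : ℕ) (hi : f.coeff i ≠ 0) : i = n := by
    have hXpow (m : ℕ) : (RatFunc.X ^ m : RatFunc K).intDegree = m := by
      rw [← algebraMap_X, ← map_pow, intDegree_polynomial, natDegree_X_pow]
    have := congrArg intDegree (hcoeff i)
    rw [intDegree_mul ((map_ne_zero σ).mpr hi) (pow_ne_zero _ X_ne_zero),
      intDegree_mul hi (pow_ne_zero _ X_ne_zero), hσ, hXpow, hXpow] at this
    omega
  refine ⟨?_, mul_right_cancel₀ (pow_ne_zero _ X_ne_zero) (hcoeff n)⟩
  ext i
  rw [coeff_C_mul_X_pow]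
  split_ifs with hin
  · rw [hin]
  · by_contra hi
    exact hin (hsupport i hi)

theorem exists_eq_algebraMap_of_map_eq_self (hσ : ∀ b, (σ b).intDegree = b.intDegree)
    {ψ : RatFunc (RatFunc K) →+* RatFunc (RatFunc K)}
    (hψ : ∀ f, ψ (algebraMap _ (RatFunc (RatFunc K)) f) = algebraMap _ _ (twist σ f))
    {β : RatFunc (RatFunc K)} (hβ : ψ β = β) :
    ∃ a, σ a = a ∧ β = algebraMap (RatFunc K) (RatFunc (RatFunc K)) a := by
  obtain ⟨c, hnum, hdenom⟩ := exists_num_denom_eq_C_mul_of_map_eq_self hψ (degree_twist σ) hβ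
  have hc : c = RatFunc.X ^ β.denom.natDegree := by
    simpa [coeff_twist, β.monic_denom.coeff_natDegree] using
      (congrArg (coeff · β.denom.natDegree) hdenom).symm
  rw [hc] at hnum hdenom
  have hdenom' : β.denom = Polynomial.X ^ β.denom.natDegree := by
    conv_lhs => rw [(eq_C_mul_X_pow_of_twist_eq hσ hdenom).1, β.monic_denom.coeff_natDegree,
      C_1, one_mul]
  obtain ⟨hnum', hfix⟩ := eq_C_mul_X_pow_of_twist_eq hσ hnum
  refine ⟨_, hfix, ?_⟩
  conv_lhs => rw [← num_div_denom β, hnum', map_mul, ← hdenom',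
    mul_div_cancel_right₀ _ (algebraMap_ne_zero β.denom_ne_zero), algebraMap_C]
  rw [algebraMap_eq_C]

end Twist

section GammaField

variable {ρ : RatFunc (RatFunc K) →+* RatFunc (RatFunc K)}

theorem map_algebraMap_eq_algebraMap_shift
    (hx : ρ (algebraMap (RatFunc K) (RatFunc (RatFunc K)) RatFunc.X)
        = algebraMap (RatFunc K) (RatFunc (RatFunc K)) (RatFunc.X + 1))
    (hC : ∀ c : K, ρ (algebraMap (RatFunc K) (RatFunc (RatFunc K)) (algebraMap K (RatFunc K) c))
        = algebraMap (RatFunc K) (RatFunc (RatFunc K)) (algebraMap K (RatFunc K) c))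
    (a : RatFunc K) :
    ρ (algebraMap (RatFunc K) (RatFunc (RatFunc K)) a)
      = algebraMap (RatFunc K) (RatFunc (RatFunc K)) (shift 1 a) := by
  suffices ρ.comp (algebraMap (RatFunc K) (RatFunc (RatFunc K)))
      = (algebraMap (RatFunc K) (RatFunc (RatFunc K))).comp (shift 1) from
    RingHom.congr_fun this a
  refine IsLocalization.ringHom_ext (nonZeroDivisors K[X])
    (Polynomial.ringHom_ext (fun c ↦ ?_) ?_)
  · simp only [RingHom.comp_apply]
    rw [shift_algebraMap, taylor_C]
    simpa only [algebraMap_C, algebraMap_eq_C] using hC c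
  · simp only [RingHom.comp_apply]
    rw [shift_algebraMap, taylor_X, map_add, algebraMap_X, C_1, map_one]
    exact hx

theorem map_algebraMap_eq_algebraMap_twist
    (hx : ρ (algebraMap (RatFunc K) (RatFunc (RatFunc K)) RatFunc.X)
        = algebraMap (RatFunc K) (RatFunc (RatFunc K)) (RatFunc.X + 1))
    (hT : ρ (RatFunc.X : RatFunc (RatFunc K))
        = algebraMap (RatFunc K) (RatFunc (RatFunc K)) RatFunc.X
          * (RatFunc.X : RatFunc (RatFunc K)))
    (hC : ∀ c : K, ρ (algebraMap (RatFunc K) (RatFunc (RatFunc K)) (algebraMap K (RatFunc K) c))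
        = algebraMap (RatFunc K) (RatFunc (RatFunc K)) (algebraMap K (RatFunc K) c))
    (f : (RatFunc K)[X]) :
    ρ (algebraMap (RatFunc K)[X] (RatFunc (RatFunc K)) f)
      = algebraMap (RatFunc K)[X] (RatFunc (RatFunc K)) (twist (shift 1) f) := by
  suffices ρ.comp (algebraMap (RatFunc K)[X] (RatFunc (RatFunc K)))
      = (algebraMap (RatFunc K)[X] (RatFunc (RatFunc K))).comp (twist (shift 1)) from
    RingHom.congr_fun this f
  refine Polynomial.ringHom_ext (fun a ↦ ?_) ?_
  · simpa [twist, algebraMap_C, algebraMap_eq_C] using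
      map_algebraMap_eq_algebraMap_shift hx hC a
  · simpa [twist, algebraMap_C, algebraMap_eq_C, algebraMap_X] using hT

end GammaField

end RatFunc

/-- Hölder-type constancy: model `F₀ = ℂ(x, Γ) ≅ ℂ(x)(T)` (Γ transcendental
over `ℂ(x)`) as `RatFunc (RatFunc ℂ)`, with inner variable `x` and outer
variable `T` playing the role of `Γ`. Let `ρ` be a field automorphism with
`ρ(x) = x + 1`, `ρ(T) = x·T` (the functional equation `Γ(x+1) = xΓ(x)`),
fixing `ℂ` pointwise. Then every `ρ`-constant `β ∈ ℂ(x, Γ)` is a complex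
constant. -/
theorem stmt14
    (ρ : RatFunc (RatFunc ℂ) ≃+* RatFunc (RatFunc ℂ))
    (hx : ρ (algebraMap (RatFunc ℂ) (RatFunc (RatFunc ℂ)) RatFunc.X)
        = algebraMap (RatFunc ℂ) (RatFunc (RatFunc ℂ)) (RatFunc.X + 1))
    (hT : ρ (RatFunc.X : RatFunc (RatFunc ℂ))
        = algebraMap (RatFunc ℂ) (RatFunc (RatFunc ℂ)) RatFunc.X
          * (RatFunc.X : RatFunc (RatFunc ℂ)))
    (hC : ∀ c : ℂ,
      ρ (algebraMap (RatFunc ℂ) (RatFunc (RatFunc ℂ)) (algebraMap ℂ (RatFunc ℂ) c))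
        = algebraMap (RatFunc ℂ) (RatFunc (RatFunc ℂ)) (algebraMap ℂ (RatFunc ℂ) c)) :
    ∀ β : RatFunc (RatFunc ℂ), ρ β = β →
      ∃ c : ℂ, β = algebraMap (RatFunc ℂ) (RatFunc (RatFunc ℂ))
        (algebraMap ℂ (RatFunc ℂ) c) := by
  intro β hβ
  obtain ⟨a, ha, rfl⟩ := RatFunc.exists_eq_algebraMap_of_map_eq_self (RatFunc.intDegree_shift 1)
    (ψ := ρ.toRingHom) (RatFunc.map_algebraMap_eq_algebraMap_twist hx hT hC) hβ
  obtain ⟨c, rfl⟩ := RatFunc.exists_eq_algebraMap_of_shift_eq_self one_ne_zero ha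
  exact ⟨c, rfl⟩
end
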